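/- arXiv:1211.4144 — 4 statements merged into one kernel-verified Lean document; each statement's English description precedes it below -/
import Mathlib

section
/- For all complex k, κ ≠ 0 such that A + B·I(k,iκ) is invertible (where I(k,iκ) = diag(ik·I_n, -κ·I_m)), the coefficient matrix 𝔠(k,iκ) = -(A + B·I(k,iκ))⁻¹(A - B·I(k,iκ)) satisfies 𝔠(k,iκ)·𝔠(-k,-iκ) = 1, i.e., 𝔠(k,iκ)⁻¹ = 𝔠(-k,-iκ). -/
open Matrix

/-- For `k, κ ≠ 0` with `A + B·I(k,iκ)` and `A - B·I(k,iκ)` invertible, the coefficient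
matrix `𝔠(k,iκ) = -(A + B·I(k,iκ))⁻¹(A - B·I(k,iκ))` satisfies `𝔠(k,iκ)·𝔠(-k,-iκ) = 1`,
where `I(k,iκ) = diag(ik·Iₙ, -κ·Iₘ)` (so `I(-k,-iκ) = -I(k,iκ)`). -/
theorem stmt_5 (n m : ℕ) (k κ : ℂ) (hk : k ≠ 0) (hκ : κ ≠ 0)
    (A B M : Matrix (Fin n ⊕ Fin m) (Fin n ⊕ Fin m) ℂ)
    (hM : M = Matrix.fromBlocks ((Complex.I * k) • 1) 0 0 ((-κ) • 1))
    (h1 : IsUnit (A + B * M)) (h2 : IsUnit (A - B * M)) :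
    (-(A + B * M)⁻¹ * (A - B * M)) * (-(A + B * (-M))⁻¹ * (A - B * (-M))) = 1 := by
  have e1 : A + B * (-M) = A - B * M := by noncomm_ring
  have e2 : A - B * (-M) = A + B * M := by noncomm_ring
  simp only [neg_mul, mul_neg, neg_neg, sub_neg_eq_add, ← sub_eq_add_neg]
  rw [mul_assoc, ← mul_assoc (A - B * M),
    Matrix.mul_nonsing_inv _ ((Matrix.isUnit_iff_isUnit_det _).mp h2), one_mul,
    Matrix.nonsing_inv_mul _ ((Matrix.isUnit_iff_isUnit_det _).mp h1)]
end

section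
/- For A = [[-1,1],[0,0]], B = [[0,0],[-1,1]] and any real k > 0, the coefficient matrix 𝔠(k,ik) = -(A + B·diag(ik,-k))⁻¹(A - B·diag(ik,-k)) equals the k-independent matrix [[i, 1-i],[1+i, -i]]. -/
open Matrix

/-
The matrix `P = A + B·diag(ik,-k) = [[-1, 1], [-ik, -k]]` has determinant `(1 + i)k ≠ 0`, and a
direct multiplication shows `P·C = -(A - B·diag(ik,-k))` for `C = [[i, 1-i], [1+i, -i]]`. Hence
`-P⁻¹(A - B·diag(ik,-k)) = P⁻¹(P·C) = C`, and every `k` cancels along the way.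
-/

theorem Matrix.neg_inv_mul_eq_of_mul_eq_neg {n R : Type*} [Fintype n] [DecidableEq n]
    [CommRing R] {P Q C : Matrix n n R} (hP : IsUnit P.det) (hPC : P * C = -Q) :
    -P⁻¹ * Q = C := by
  rw [neg_mul, ← mul_neg, ← hPC, nonsing_inv_mul_cancel_left _ _ hP]

section StarGraph

variable (k : ℂ)

theorem starGraph_add_eq :
    !![(-1 : ℂ), 1; 0, 0] + !![0, 0; -1, 1] * !![Complex.I * k, 0; 0, -k] =
      !![-1, 1; -(Complex.I * k), -k] := by
  rw [Matrix.mul_fin_two]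
  ext i j
  fin_cases i <;> fin_cases j <;> simp

theorem starGraph_sub_eq :
    !![(-1 : ℂ), 1; 0, 0] - !![0, 0; -1, 1] * !![Complex.I * k, 0; 0, -k] =
      !![-1, 1; Complex.I * k, k] := by
  rw [Matrix.mul_fin_two]
  ext i j
  fin_cases i <;> fin_cases j <;> simp

theorem isUnit_det_starGraph_add (hk : k ≠ 0) : IsUnit !![-1, 1; -(Complex.I * k), -k].det := by
  have h1I : 1 + Complex.I ≠ 0 := fun h => by simpa using congrArg Complex.re h
  rw [Matrix.det_fin_two_of, isUnit_iff_ne_zero]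
  convert mul_ne_zero h1I hk using 1
  ring

theorem starGraph_add_mul_coeff :
    !![-1, 1; -(Complex.I * k), -k] * !![Complex.I, 1 - Complex.I; 1 + Complex.I, -Complex.I] =
      -!![-1, 1; Complex.I * k, k] := by
  rw [Matrix.mul_fin_two, Matrix.neg_of]
  congr 1
  ext i j
  fin_cases i <;> fin_cases j <;> simp <;> ring_nf <;> simp only [Complex.I_sq] <;> ring

end StarGraph

/-- For `A = [[-1,1],[0,0]]`, `B = [[0,0],[-1,1]]` and any real `k > 0`, the coefficient
matrix `𝔠(k,ik) = -(A + B·diag(ik,-k))⁻¹(A - B·diag(ik,-k))` equals the `k`-independent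
matrix `[[i, 1-i],[1+i, -i]]`. -/
theorem stmt_9 (k : ℝ) (hk : 0 < k)
    (A B M : Matrix (Fin 2) (Fin 2) ℂ)
    (hA : A = !![-1, 1; 0, 0]) (hB : B = !![0, 0; -1, 1])
    (hM : M = !![Complex.I * (k : ℂ), 0; 0, -(k : ℂ)]) :
    -(A + B * M)⁻¹ * (A - B * M) =
      !![Complex.I, 1 - Complex.I; 1 + Complex.I, -Complex.I] := by
  subst hA hB hM
  have hk0 : (k : ℂ) ≠ 0 := by exact_mod_cast hk.ne'
  rw [starGraph_add_eq, starGraph_sub_eq]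
  exact Matrix.neg_inv_mul_eq_of_mul_eq_neg (isUnit_det_starGraph_add _ hk0) (starGraph_add_mul_coeff _)
end

section
/- With A = [[1,-1,0],[0,1,-1],[0,0,0]], B = [[0,0,0],[0,0,0],[1,1,-1]], and M(k) = diag(ik, ik, -k) for k > 0, one has -(A + B·M(k))⁻¹(A - B·M(k)) = [[-1/5+2i/5, 4/5+2i/5, 2/5-4i/5],[4/5+2i/5, -1/5+2i/5, 2/5-4i/5],[4/5+2i/5, 4/5+2i/5, -3/5-4i/5]], independent of k. -/
open Matrix

/-!
Write `M(k) = k • D` with `D = diag(i, i, -1)`. The identity `-(A + k BD)⁻¹ (A - k BD) = S` is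
equivalent to `A (S + 1) + k BD (S - 1) = 0`, and for the given `S` both `A (S + 1)` and
`BD (S - 1)` vanish, which is why the result does not depend on `k`. Invertibility comes from
`det (A + k BD) = k (1 + 2i)`.
-/

namespace Matrix

variable {n R : Type*} [Fintype n] [DecidableEq n] [CommRing R]

theorem neg_inv_mul_eq_of_mul_eq_neg_s15 {N P S : Matrix n n R} (hN : IsUnit N.det)
    (h : N * S = -P) : -N⁻¹ * P = S := by
  rw [← nonsing_inv_mul_cancel_left N S hN, h, neg_mul, mul_neg]

theorem add_smul_mul_eq_neg_sub_smul {A C S : Matrix n n R} (c : R)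
    (hA : A * (S + 1) = 0) (hC : C * (S - 1) = 0) :
    (A + c • C) * S = -(A - c • C) := by
  have key : (A + c • C) * S + (A - c • C) = A * (S + 1) + c • (C * (S - 1)) := by
    simp only [add_mul, mul_add, mul_sub, smul_mul, mul_one, smul_sub]
    abel
  rw [hA, hC, smul_zero, add_zero] at key
  exact eq_neg_of_add_eq_zero_left key

end Matrix

namespace StarGraph

open Complex

noncomputable abbrev boundaryA : Matrix (Fin 3) (Fin 3) ℂ := !![1, -1, 0; 0, 1, -1; 0, 0, 0]

noncomputable abbrev boundaryB : Matrix (Fin 3) (Fin 3) ℂ := !![0, 0, 0; 0, 0, 0; 1, 1, -1]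

noncomputable abbrev diagD : Matrix (Fin 3) (Fin 3) ℂ := !![I, 0, 0; 0, I, 0; 0, 0, -1]

noncomputable abbrev scattering : Matrix (Fin 3) (Fin 3) ℂ :=
  !![-(1/5) + (2/5) * I, 4/5 + (2/5) * I, 2/5 - (4/5) * I;
     4/5 + (2/5) * I, -(1/5) + (2/5) * I, 2/5 - (4/5) * I;
     4/5 + (2/5) * I, 4/5 + (2/5) * I, -(3/5) - (4/5) * I]

theorem iDiag_mul_eq_smul_diagD (k : ℂ) :
    !![I * k, 0, 0; 0, I * k, 0; 0, 0, -k] = k • diagD := by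
  ext i j
  fin_cases i <;> fin_cases j <;> simp [mul_comm]

theorem boundaryA_mul_scattering_add_one : boundaryA * (scattering + 1) = 0 := by
  rw [one_fin_three]
  ext i j
  fin_cases i <;> fin_cases j <;> simp [Matrix.mul_apply, Fin.sum_univ_succ] <;> ring

theorem boundaryB_mul_diagD_mul_scattering_sub_one :
    boundaryB * diagD * (scattering - 1) = 0 := by
  rw [one_fin_three]
  ext i j
  fin_cases i <;> fin_cases j <;> simp [Matrix.mul_apply, Fin.sum_univ_succ] <;> ring_nf <;>
    simp [I_sq]

theorem det_boundaryA_add_smul (k : ℂ) :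
    (boundaryA + k • (boundaryB * diagD)).det = k * (1 + 2 * I) := by
  simp [det_fin_three]
  ring

theorem one_add_two_mul_I_ne_zero : (1 + 2 * I : ℂ) ≠ 0 := by
  intro h
  simpa using congrArg im h

end StarGraph

open StarGraph in
/-- For the three-edge star graph with `A`, `B` as below and `M(k) = diag(ik,ik,-k)`,
`k > 0`, the coefficient matrix `-(A + B·M(k))⁻¹(A - B·M(k))` equals the `k`-independent
matrix `[[-1/5+2i/5, 4/5+2i/5, 2/5-4i/5],[4/5+2i/5, -1/5+2i/5, 2/5-4i/5],
[4/5+2i/5, 4/5+2i/5, -3/5-4i/5]]`. -/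
theorem stmt_15 (k : ℝ) (hk : 0 < k)
    (A B M : Matrix (Fin 3) (Fin 3) ℂ)
    (hA : A = !![1, -1, 0; 0, 1, -1; 0, 0, 0])
    (hB : B = !![0, 0, 0; 0, 0, 0; 1, 1, -1])
    (hM : M = !![Complex.I * (k : ℂ), 0, 0; 0, Complex.I * (k : ℂ), 0; 0, 0, -(k : ℂ)]) :
    -(A + B * M)⁻¹ * (A - B * M) =
      !![-(1/5) + (2/5) * Complex.I, 4/5 + (2/5) * Complex.I, 2/5 - (4/5) * Complex.I;
         4/5 + (2/5) * Complex.I, -(1/5) + (2/5) * Complex.I, 2/5 - (4/5) * Complex.I;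
         4/5 + (2/5) * Complex.I, 4/5 + (2/5) * Complex.I, -(3/5) - (4/5) * Complex.I] := by
  subst hA hB hM
  rw [iDiag_mul_eq_smul_diagD, Matrix.mul_smul]
  have hdet : IsUnit (boundaryA + (k : ℂ) • (boundaryB * diagD)).det := by
    rw [det_boundaryA_add_smul]
    exact (mul_ne_zero (by exact_mod_cast hk.ne') one_add_two_mul_I_ne_zero).isUnit
  exact neg_inv_mul_eq_of_mul_eq_neg_s15 hdet <| add_smul_mul_eq_neg_sub_smul _
    boundaryA_mul_scattering_add_one boundaryB_mul_diagD_mul_scattering_sub_one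
end

section
/- Let χ¹ = χ² = [[i, 1-i],[1+i, -i]] (2×2, with scalar blocks χ₊₊ = i, χ₊₋ = 1-i, χ₋₊ = 1+i, χ₋₋ = -i) and a > 0. Then the star-product gluing formulas s₁₁ = χ₊₊ + χ₊₋·e^{-ka}·χ₋₋·e^{-ka}·(1 - χ₋₋e^{-ka}χ₋₋e^{-ka})⁻¹·χ₋₊ and s₂₁ = χ₊₋·e^{-ka}·(1 - χ₋₋e^{-ka}χ₋₋e^{-ka})⁻¹·χ₋₊ evaluate, for all k > 0, to s₁₁(k) = i·tanh(ka) and s₂₁(k) = 1/cosh(ka). -/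
/-!
With `t = e^{-ka}` one has `χ₋₋ t χ₋₋ t = -t²` and `χ₊₋ χ₋₊ = 2`, so the two gluing formulas
collapse to the rational functions `i (1 - t²)/(1 + t²)` and `2t/(1 + t²)`; these are
`i tanh(ka)` and `1/cosh(ka)` written in the variable `e^{-ka}`.
-/

open Complex

lemma star_product_denom_eq (t : ℂ) : 1 - (-I) * t * (-I) * t = 1 + t ^ 2 := by
  linear_combination -t ^ 2 * I_sq

lemma star_product_s11_eq (t : ℂ) (ht : 1 + t ^ 2 ≠ 0) :
    I + (1 - I) * t * (-I) * t * (1 - (-I) * t * (-I) * t)⁻¹ * (1 + I)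
      = I * ((1 - t ^ 2) / (1 + t ^ 2)) := by
  rw [star_product_denom_eq]
  field_simp
  linear_combination t ^ 2 * I_sq

lemma star_product_s21_eq (t : ℂ) (ht : 1 + t ^ 2 ≠ 0) :
    (1 - I) * t * (1 - (-I) * t * (-I) * t)⁻¹ * (1 + I) = 2 * t / (1 + t ^ 2) := by
  rw [star_product_denom_eq]
  field_simp
  linear_combination -t * I_sq

lemma Real.exp_mul_exp_neg (x : ℝ) : Real.exp x * Real.exp (-x) = 1 := by
  rw [← Real.exp_add, add_neg_cancel, Real.exp_zero]

lemma Real.tanh_eq_exp_neg (x : ℝ) :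
    Real.tanh x = (1 - Real.exp (-x) ^ 2) / (1 + Real.exp (-x) ^ 2) := by
  rw [Real.tanh_eq]
  field_simp
  linear_combination 2 * Real.exp (-x) * Real.exp_mul_exp_neg x

lemma Real.inv_cosh_eq_exp_neg (x : ℝ) :
    1 / Real.cosh x = 2 * Real.exp (-x) / (1 + Real.exp (-x) ^ 2) := by
  rw [Real.cosh_eq]
  field_simp
  linear_combination -Real.exp_mul_exp_neg x

theorem stmt_16_general (a k : ℝ) :
    (Complex.I + (1 - Complex.I) * (Real.exp (-(k * a)) : ℂ) * (-Complex.I) *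
        (Real.exp (-(k * a)) : ℂ) *
        (1 - (-Complex.I) * (Real.exp (-(k * a)) : ℂ) * (-Complex.I) *
          (Real.exp (-(k * a)) : ℂ))⁻¹ * (1 + Complex.I)
      = Complex.I * (Real.tanh (k * a) : ℂ)) ∧
    ((1 - Complex.I) * (Real.exp (-(k * a)) : ℂ) *
        (1 - (-Complex.I) * (Real.exp (-(k * a)) : ℂ) * (-Complex.I) *
          (Real.exp (-(k * a)) : ℂ))⁻¹ * (1 + Complex.I)
      = 1 / (Real.cosh (k * a) : ℂ)) := by
  have hden : (1 : ℂ) + (Real.exp (-(k * a)) : ℂ) ^ 2 ≠ 0 := by exact_mod_cast by positivity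
  refine ⟨?_, ?_⟩
  · rw [star_product_s11_eq _ hden, Real.tanh_eq_exp_neg]
    norm_cast
  · rw [star_product_s21_eq _ hden, ← ofReal_one, ← ofReal_div, Real.inv_cosh_eq_exp_neg]
    norm_cast

/-- Gluing two copies of the two-edge star graph (`χ₊₊ = i`, `χ₊₋ = 1-i`, `χ₋₊ = 1+i`,
`χ₋₋ = -i`) along the negative edges with edge length `a`: the star-product formulas
give `s₁₁(k) = i·tanh(ka)` and `s₂₁(k) = 1/cosh(ka)` for all `k > 0`. -/
theorem stmt_16 (a k : ℝ) (ha : 0 < a) (hk : 0 < k) :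
    (Complex.I + (1 - Complex.I) * (Real.exp (-(k * a)) : ℂ) * (-Complex.I) *
        (Real.exp (-(k * a)) : ℂ) *
        (1 - (-Complex.I) * (Real.exp (-(k * a)) : ℂ) * (-Complex.I) *
          (Real.exp (-(k * a)) : ℂ))⁻¹ * (1 + Complex.I)
      = Complex.I * (Real.tanh (k * a) : ℂ)) ∧
    ((1 - Complex.I) * (Real.exp (-(k * a)) : ℂ) *
        (1 - (-Complex.I) * (Real.exp (-(k * a)) : ℂ) * (-Complex.I) *
          (Real.exp (-(k * a)) : ℂ))⁻¹ * (1 + Complex.I)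
      = 1 / (Real.cosh (k * a) : ℂ)) :=
  stmt_16_general a k
end
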